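/- arXiv:2310.01221 — 2 statements merged into one kernel-verified Lean document; each statement's English description precedes it below -/
import Mathlib

section
/- Let Ω ⊂ ℝⁿ be a bounded domain with boundary ∂Ω, let μ : Ω → ℝ satisfy μ(x) > 0 for all x ∈ Ω, let R_δ, R̄_δ be nonnegative kernels, and assume that for every x ∈ Ω, ∫_{∂Ω} R̄_δ(x,y) dS_y > 0. Define the operator L_{δ,μ} v(x) = (1/δ²) ∫_Ω R_δ(x,y)(v(x)−v(y)) dy + (2 v(x)/μ(x)) ∫_{∂Ω} R̄_δ(x,y) dS_y. If u ∈ C(Ω̄) satisfies L_{δ,μ} u(x) ≥ 0 for all x ∈ Ω̄, then u(x) ≥ 0 for all x ∈ Ω̄. -/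
open MeasureTheory Set

/-- Maximum principle for the nonlocal operator
`L_{δ,μ} v(x) = (1/δ²) ∫_Ω R_δ(x,y)(v(x)−v(y)) dy + (2 v(x)/μ(x)) ∫_{∂Ω} R̄_δ(x,y) dS_y`:
if `u ∈ C(Ω̄)` and `L_{δ,μ} u ≥ 0` on `Ω̄`, then `u ≥ 0` on `Ω̄`. -/
theorem stmt_2 {n : ℕ} (Ω : Set (EuclideanSpace ℝ (Fin n)))
    (hΩm : MeasurableSet Ω) (hΩb : Bornology.IsBounded Ω)
    (σ : Measure (EuclideanSpace ℝ (Fin n)))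
    (δ : ℝ) (hδ : 0 < δ)
    (μw : EuclideanSpace ℝ (Fin n) → ℝ) (hμ : ∀ x ∈ closure Ω, 0 < μw x)
    (Rδ Rbδ : EuclideanSpace ℝ (Fin n) → EuclideanSpace ℝ (Fin n) → ℝ)
    (hRnn : ∀ x y, 0 ≤ Rδ x y) (hRbnn : ∀ x y, 0 ≤ Rbδ x y)
    (hbpos : ∀ x ∈ closure Ω, 0 < ∫ y in frontier Ω, Rbδ x y ∂σ)
    (u : EuclideanSpace ℝ (Fin n) → ℝ) (hu : ContinuousOn u (closure Ω))
    (hLu : ∀ x ∈ closure Ω,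
      0 ≤ (1 / δ ^ 2) * (∫ y in Ω, Rδ x y * (u x - u y)) +
          (2 * u x / μw x) * ∫ y in frontier Ω, Rbδ x y ∂σ) :
    ∀ x ∈ closure Ω, 0 ≤ u x := by
  intro x hx
  have hK : IsCompact (closure Ω) := hΩb.isCompact_closure
  obtain ⟨x₀, hx₀, hmin⟩ := hK.exists_isMinOn ⟨x, hx⟩ hu
  have hx₀min : ∀ y ∈ closure Ω, u x₀ ≤ u y := hmin
  have hI : (∫ y in Ω, Rδ x₀ y * (u x₀ - u y)) ≤ 0 := by
    apply setIntegral_nonpos hΩm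
    intro y hy
    have hyc : y ∈ closure Ω := subset_closure hy
    have := hx₀min y hyc
    have h1 : u x₀ - u y ≤ 0 := by linarith
    exact mul_nonpos_of_nonneg_of_nonpos (hRnn x₀ y) h1
  have hs := hbpos x₀ hx₀
  have hμ0 := hμ x₀ hx₀
  have hL := hLu x₀ hx₀
  have hterm : 0 ≤ (2 * u x₀ / μw x₀) * ∫ y in frontier Ω, Rbδ x₀ y ∂σ := by
    have h2 : (1 / δ ^ 2) * (∫ y in Ω, Rδ x₀ y * (u x₀ - u y)) ≤ 0 := by
      apply mul_nonpos_of_nonneg_of_nonpos _ hI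
      positivity
    linarith
  have h3 : 0 ≤ 2 * u x₀ / μw x₀ := nonneg_of_mul_nonneg_right (by linarith [hterm] : (0:ℝ) ≤ (∫ y in frontier Ω, Rbδ x₀ y ∂σ) * (2 * u x₀ / μw x₀)) hs
  have h4 : 0 ≤ u x₀ := by
    rw [div_nonneg_iff] at h3
    rcases h3 with ⟨h, _⟩ | ⟨_, h⟩
    · linarith
    · linarith
  exact le_trans h4 (hx₀min x hx)
end

section
/- Let B(c₁, r₁) and B(c₂, r₂) be two open balls in ℝⁿ with r₁, r₂ ≥ (√2/4)δ and r₁ + r₂ − |c₁ − c₂| ≥ (√2/2)δ, where δ > 0. Then there exists a ball B of radius (√2/4)δ with B ⊆ B(c₁,r₁) ∩ B(c₂,r₂), and consequently the Lebesgue measure of the intersection satisfies |B(c₁,r₁) ∩ B(c₂,r₂)| ≥ (√2/4)ⁿ δⁿ |B(0,1)|. -/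
open MeasureTheory Set Metric

/-- If two balls in ℝⁿ have radii `≥ (√2/4)δ` and overlap in the sense
`r₁ + r₂ − |c₁ − c₂| ≥ (√2/2)δ`, then their intersection contains a ball of radius
`(√2/4)δ`, so its volume is at least `(√2/4)ⁿ δⁿ |B(0,1)|`. -/
theorem stmt_6 {n : ℕ} (δ r₁ r₂ : ℝ) (hδ : 0 < δ)
    (c₁ c₂ : EuclideanSpace ℝ (Fin n))
    (hr₁ : Real.sqrt 2 / 4 * δ ≤ r₁) (hr₂ : Real.sqrt 2 / 4 * δ ≤ r₂)
    (hoverlap : Real.sqrt 2 / 2 * δ ≤ r₁ + r₂ - dist c₁ c₂) :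
    (∃ c : EuclideanSpace ℝ (Fin n),
        ball c (Real.sqrt 2 / 4 * δ) ⊆ ball c₁ r₁ ∩ ball c₂ r₂) ∧
      ENNReal.ofReal ((Real.sqrt 2 / 4) ^ n * δ ^ n) *
          volume (ball (0 : EuclideanSpace ℝ (Fin n)) 1) ≤
        volume (ball c₁ r₁ ∩ ball c₂ r₂) := by
  set ρ := Real.sqrt 2 / 4 * δ with hρdef
  have h2 : (0:ℝ) < Real.sqrt 2 := by positivity
  have hρpos : 0 < ρ := by positivity
  have hov : 2 * ρ ≤ r₁ + r₂ - dist c₁ c₂ := by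
    have : Real.sqrt 2 / 2 * δ = 2 * ρ := by rw [hρdef]; ring
    linarith
  have hd : (0:ℝ) ≤ dist c₁ c₂ := dist_nonneg
  obtain ⟨c, hc₁, hc₂⟩ : ∃ c : EuclideanSpace ℝ (Fin n),
      dist c c₁ ≤ r₁ - ρ ∧ dist c c₂ ≤ r₂ - ρ := by
    by_cases h : dist c₁ c₂ ≤ r₁ - ρ
    · exact ⟨c₂, by rwa [dist_comm], by simp; linarith⟩
    · push_neg at h
      have hdpos : 0 < dist c₁ c₂ := lt_of_le_of_lt (by linarith) h
      set t : ℝ := (r₁ - ρ) / dist c₁ c₂ with ht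
      have ht0 : 0 ≤ t := div_nonneg (by linarith) hd
      have ht1 : t ≤ 1 := by
        rw [div_le_one hdpos]; linarith
      refine ⟨c₁ + t • (c₂ - c₁), ?_, ?_⟩
      · have heq : dist (c₁ + t • (c₂ - c₁)) c₁ = t * dist c₁ c₂ := by
          rw [dist_eq_norm, add_sub_cancel_left, norm_smul, Real.norm_eq_abs,
            abs_of_nonneg ht0, ← dist_eq_norm, dist_comm c₂ c₁]
        rw [heq, ht, div_mul_cancel₀ _ (ne_of_gt hdpos)]
      · have hv : c₁ + t • (c₂ - c₁) - c₂ = (1 - t) • (c₁ - c₂) := by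
          simp [smul_sub, sub_smul]; abel
        have heq : dist (c₁ + t • (c₂ - c₁)) c₂ = (1 - t) * dist c₁ c₂ := by
          rw [dist_eq_norm, hv, norm_smul, Real.norm_eq_abs,
            abs_of_nonneg (by linarith : (0:ℝ) ≤ 1 - t), ← dist_eq_norm]
        rw [heq]
        have h3 : (1 - t) * dist c₁ c₂ = dist c₁ c₂ - (r₁ - ρ) := by
          rw [ht]; field_simp
        rw [h3]; linarith
  have hsub : ball c ρ ⊆ ball c₁ r₁ ∩ ball c₂ r₂ := by
    refine subset_inter (ball_subset_ball' ?_) (ball_subset_ball' ?_) <;> linarith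
  refine ⟨⟨c, hsub⟩, ?_⟩
  cases n with
  | zero =>
      have hball : ∀ (x : EuclideanSpace ℝ (Fin 0)) (r : ℝ), 0 < r → ball x r = univ := by
        intro x r hr
        ext y
        simp [Subsingleton.elim y x, hr]
      rw [hball _ _ one_pos, hball _ _ (by linarith : (0:ℝ) < r₁),
        hball _ _ (by linarith : (0:ℝ) < r₂)]
      simp
  | succ m =>
      calc ENNReal.ofReal ((Real.sqrt 2 / 4) ^ (m+1) * δ ^ (m+1)) *
            volume (ball (0 : EuclideanSpace ℝ (Fin (m+1))) 1)
          = volume (ball c ρ) := by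
            rw [Measure.addHaar_ball volume c hρpos.le]
            congr 2
            rw [← mul_pow, finrank_euclideanSpace_fin]
        _ ≤ volume (ball c₁ r₁ ∩ ball c₂ r₂) := measure_mono hsub
end
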